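/- arXiv:1801.02152 — 2 statements merged into one kernel-verified Lean document; each statement's English description precedes it below -/
import Mathlib

section
/- Let m ≥ 1 and let A, B, C be m×m matrices over F₂ such that the digital net generated by (A, B, C) is a (0,m,3)-net over F₂. Let a_i, b_i, c_i denote the i-th rows of A, B, C respectively, and for integers i, j ≥ 0 with i+j ≤ m−1 let V_{i,j} be the F₂-subspace of F₂^m spanned by a_1,…,a_i, b_1,…,b_{m−i−j−1}, c_1,…,c_j. Then for every 0 ≤ j ≤ m−1, the coset c_{j+1} + span{c_1,…,c_j} equals the set ⋂_{i=0}^{m−j−1} (F₂^m \ V_{i,j}). -/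
open Matrix

/-- The vector of binary digits of `l` (least significant first). -/
def digitsVec (m l : ℕ) : Fin m → ZMod 2 := fun k => if l.testBit k.val then 1 else 0

/-- The map φ sending a bit vector to a real number in [0,1). -/
noncomputable def phiMap (m : ℕ) (y : Fin m → ZMod 2) : ℝ :=
  ∑ k : Fin m, ((y k).val : ℝ) / 2 ^ (k.val + 1)

/-- The digital net (as a multiset of `2^m` points in `[0,1)^s`) generated by
matrices `C 0, …, C (s-1)`. -/
noncomputable def digitalNet (m s : ℕ) (C : Fin s → Matrix (Fin m) (Fin m) (ZMod 2)) :
    Multiset (Fin s → ℝ) :=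
  (Multiset.range (2 ^ m)).map fun l => fun j => phiMap m ((C j).mulVec (digitsVec m l))

open Classical in
/-- `P` is a `(t,m,s)`-net over `F₂`: every elementary interval of volume `2^{t-m}`
contains exactly `2^t` points of `P`, counted with multiplicity. -/
def IsNet (t m s : ℕ) (P : Multiset (Fin s → ℝ)) : Prop :=
  ∀ d : Fin s → ℕ, (∑ i, d i) = m - t →
    ∀ a : Fin s → ℕ, (∀ i, a i < 2 ^ d i) →
      (P.countP fun x => ∀ i,
        ((a i : ℝ) / 2 ^ d i ≤ x i ∧ x i < ((a i : ℝ) + 1) / 2 ^ d i)) = 2 ^ t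

/-- The anti-diagonal matrix `J_m` over `F₂`. -/
def Jmat (m : ℕ) : Matrix (Fin m) (Fin m) (ZMod 2) :=
  Matrix.of fun i j => if i.val + j.val = m - 1 then 1 else 0

/-- The upper-triangular Pascal matrix `P_m` over `F₂` (0-indexed entry `(i,j)` is
`binom(j,i) mod 2`). -/
def Pmat (m : ℕ) : Matrix (Fin m) (Fin m) (ZMod 2) :=
  Matrix.of fun i j => ((j.val.choose i.val : ℕ) : ZMod 2)

/-- A matrix is lower triangular. -/
def IsLowerTri {m : ℕ} (L : Matrix (Fin m) (Fin m) (ZMod 2)) : Prop :=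
  ∀ i j : Fin m, i < j → L i j = 0

/-- The set consisting of the first `n` rows of `M`. -/
def rowSet {m : ℕ} (M : Matrix (Fin m) (Fin m) (ZMod 2)) (n : ℕ) :
    Set (Fin m → ZMod 2) :=
  {x | ∃ r : Fin m, r.val < n ∧ x = M r}

/-- The subspace `V_{i,j}` spanned by the first `i` rows of `A`, the first
`m−i−j−1` rows of `B` and the first `j` rows of `C`. -/
def Vsub {m : ℕ} (A B C : Matrix (Fin m) (Fin m) (ZMod 2)) (i j : ℕ) :
    Submodule (ZMod 2) (Fin m → ZMod 2) :=
  Submodule.span (ZMod 2) (rowSet A i ∪ rowSet B (m - i - j - 1) ∪ rowSet C j)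

/-!
Every elementary box of a `(0,m,3)`-net contains a point, and a point of `[0,1)` lies in
`[a/2^d, (a+1)/2^d)` exactly when its first `d` binary digits are those of `a`. So whenever
`d₁ + d₂ + d₃ = m`, the point map `x ↦ (Ax, Bx, Cx)` hits every prescribed pattern of leading
digits, which gives the rows `a_1,…,a_{d₁}, b_1,…,b_{d₂}, c_1,…,c_{d₃}` a dual family: they
form a basis of `𝔽₂^m`. Consequently `V_{i,j}` is a hyperplane missing `c_{j+1}`, whose
complement over `𝔽₂` is the coset `c_{j+1} + V_{i,j}`; and intersecting the `V_{i,j}` one at a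
time inside these bases gives `V_{0,j} ∩ ⋯ ∩ V_{n,j} = span{b_1,…,b_{m-j-1-n}, c_1,…,c_j}`,
which is `span{c_1,…,c_j}` for `n = m-j-1`.
-/

theorem ZMod.two_eq_zero_or_eq_one (z : ZMod 2) : z = 0 ∨ z = 1 := by
  revert z; decide

theorem ZMod.val_two_eq_toNat (z : ZMod 2) : z.val = (decide (z = 1)).toNat := by
  fin_cases z <;> rfl

theorem Nat.ofBits_eq_sum {n : ℕ} (f : Fin n → Bool) :
    Nat.ofBits f = ∑ i : Fin n, (f i).toNat * 2 ^ (i : ℕ) := by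
  induction n with
  | zero => simp
  | succ n ih =>
    rw [Nat.ofBits_succ, ih, Fin.sum_univ_succ, Finset.mul_sum]
    simp only [Function.comp_apply, Fin.val_succ, pow_succ, Fin.val_zero, pow_zero]
    rw [add_comm]
    congr 1
    · ring
    · exact Finset.sum_congr rfl fun i _ => by ring

theorem phiMap_eq_ofBits (m : ℕ) (y : Fin m → ZMod 2) :
    phiMap m y = (Nat.ofBits (fun i : Fin m => decide (y i.rev = 1)) : ℝ) / 2 ^ m := by
  rw [Nat.ofBits_eq_sum, phiMap, Nat.cast_sum, Finset.sum_div]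
  refine Fintype.sum_equiv Fin.revPerm _ _ fun k => ?_
  have hm : (2 : ℝ) ^ m = 2 ^ (m - ((k : ℕ) + 1)) * 2 ^ ((k : ℕ) + 1) := by
    rw [← pow_add, Nat.sub_add_cancel k.isLt]
  rw [Fin.revPerm_apply, Fin.rev_rev, ZMod.val_two_eq_toNat, Fin.val_rev, hm, Nat.cast_mul,
    Nat.cast_pow, Nat.cast_ofNat, mul_comm, mul_div_mul_left _ _ (by positivity)]

theorem eq_one_iff_testBit_of_phiMap_mem {m d a : ℕ} {y : Fin m → ZMod 2} (hd : d ≤ m)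
    (hlo : (a : ℝ) / 2 ^ d ≤ phiMap m y) (hhi : phiMap m y < ((a : ℝ) + 1) / 2 ^ d)
    (k : Fin m) (hk : k.val < d) : y k = 1 ↔ a.testBit (d - 1 - k) := by
  set N := Nat.ofBits fun i : Fin m => decide (y i.rev = 1)
  have hpow : (2 : ℝ) ^ m = 2 ^ (m - d) * 2 ^ d := by rw [← pow_add, Nat.sub_add_cancel hd]
  rw [phiMap_eq_ofBits, hpow, ← div_div, div_le_div_iff_of_pos_right (by positivity),
    le_div_iff₀ (by positivity)] at hlo
  rw [phiMap_eq_ofBits, hpow, ← div_div, div_lt_div_iff_of_pos_right (by positivity),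
    div_lt_iff₀ (by positivity)] at hhi
  have hN : N / 2 ^ (m - d) = a :=
    Nat.div_eq_of_lt_le (by exact_mod_cast hlo) (by exact_mod_cast hhi)
  have hbit : d - 1 - k + (m - d) = k.rev := by rw [Fin.val_rev]; omega
  rw [← hN, Nat.testBit_div_two_pow, hbit, Nat.testBit_ofBits_lt _ _ k.rev.isLt, Fin.eta,
    Fin.rev_rev, decide_eq_true_iff]

theorem linearIndepOn_of_dotProduct_eq_ite {R ι n : Type*} [CommRing R] [Fintype n]
    [DecidableEq ι] {v : ι → n → R} {s : Set ι} (x : ι → n → R)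
    (h : ∀ i ∈ s, ∀ j ∈ s, v j ⬝ᵥ x i = if j = i then 1 else 0) : LinearIndepOn R v s := by
  refine LinearIndepOn.of_comp (Matrix.mulVecLin (Matrix.of fun i : s => x i)) ?_
  have hdual : (fun j : s => Matrix.mulVecLin (Matrix.of fun i : s => x i) (v j)) =
      fun j => Pi.single j 1 := by
    ext j i
    simp only [Matrix.mulVecLin_apply, Matrix.mulVec, Matrix.of_apply, dotProduct_comm (x i),
      h i i.2 j j.2, Pi.single_apply, Subtype.ext_iff, eq_comm]
  simpa only [LinearIndepOn, Function.comp_apply, hdual] using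
    Pi.linearIndependent_single_one s R

theorem LinearIndepOn.span_image_inter {R M ι : Type*} [Semiring R] [AddCommMonoid M]
    [Module R M] {v : ι → M} {u s t : Set ι} (hv : LinearIndepOn R v u) (hs : s ⊆ u)
    (ht : t ⊆ u) :
    Submodule.span R (v '' (s ∩ t)) = Submodule.span R (v '' s) ⊓ Submodule.span R (v '' t) := by
  refine le_antisymm (le_inf (Submodule.span_mono (Set.image_mono Set.inter_subset_left))
    (Submodule.span_mono (Set.image_mono Set.inter_subset_right))) ?_
  rintro x ⟨hxs, hxt⟩
  obtain ⟨f, hf, rfl⟩ := (Finsupp.mem_span_image_iff_linearCombination R).1 hxs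
  obtain ⟨g, hg, hfg⟩ := (Finsupp.mem_span_image_iff_linearCombination R).1 hxt
  have hfg : f = g := linearIndepOn_iffₛ.1 hv f (Finsupp.supported_mono hs hf) g
    (Finsupp.supported_mono ht hg) hfg.symm
  rw [Finsupp.mem_span_image_iff_linearCombination, Finsupp.supported_inter]
  exact ⟨f, ⟨hf, hfg ▸ hg⟩, rfl⟩

theorem Submodule.compl_eq_image_add_of_span_singleton_sup_eq_top {M : Type*} [AddCommGroup M]
    [Module (ZMod 2) M] {W : Submodule (ZMod 2) M} {c : M} (hc : c ∉ W)
    (htop : Submodule.span (ZMod 2) {c} ⊔ W = ⊤) : (W : Set M)ᶜ = (c + ·) '' W := by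
  ext v
  constructor
  · intro hv
    obtain ⟨y, hy, w, hw, rfl⟩ := Submodule.mem_sup.1 (htop ▸ Submodule.mem_top (x := v))
    obtain ⟨t, rfl⟩ := Submodule.mem_span_singleton.1 hy
    rcases ZMod.two_eq_zero_or_eq_one t with rfl | rfl
    · exact absurd (by simpa using hw) hv
    · exact ⟨w, hw, by rw [one_smul]⟩
  · rintro ⟨w, hw, rfl⟩ hcw
    exact hc (by simpa using W.sub_mem hcw hw)

def generatingRow {m s : ℕ} (C : Fin s → Matrix (Fin m) (Fin m) (ZMod 2)) :
    Fin s × Fin m → Fin m → ZMod 2 :=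
  fun p => C p.1 p.2

/-- Indices of the rows `a_1,…,a_{d 0}, b_1,…,b_{d 1}, …` of the generating matrices. -/
def leadingRows {s : ℕ} (m : ℕ) (d : Fin s → ℕ) : Set (Fin s × Fin m) := {p | p.2.val < d p.1}

theorem leadingRows_mono {m s : ℕ} {d d' : Fin s → ℕ} (h : d ≤ d') :
    leadingRows m d ⊆ leadingRows m d' :=
  fun p hp => lt_of_lt_of_le hp (h p.1)

theorem leadingRows_inter {m s : ℕ} (d d' : Fin s → ℕ) :
    leadingRows m d ∩ leadingRows m d' = leadingRows m (d ⊓ d') := by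
  ext p
  simp [leadingRows]

theorem card_leadingRows {m s : ℕ} {d : Fin s → ℕ} (hd : ∀ b, d b ≤ m) :
    Nat.card (leadingRows m d) = ∑ b, d b := by
  classical
  rw [Nat.card_eq_fintype_card, Fintype.card_subtype, Finset.card_filter, Fintype.sum_prod_type]
  refine Finset.sum_congr rfl fun b _ => ?_
  rw [← Finset.card_filter]
  convert Fin.card_filter_val_lt.trans (min_eq_right (hd b)) using 4
  rfl

section Net

variable {m s : ℕ} {C : Fin s → Matrix (Fin m) (Fin m) (ZMod 2)}

theorem IsNet.exists_mulVec_eq_one_iff_testBit (hnet : IsNet 0 m s (digitalNet m s C))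
    {d : Fin s → ℕ} (hd : ∑ b, d b = m) {a : Fin s → ℕ} (ha : ∀ b, a b < 2 ^ d b) :
    ∃ x : Fin m → ZMod 2, ∀ b (k : Fin m), k.val < d b →
      ((C b *ᵥ x) k = 1 ↔ (a b).testBit (d b - 1 - k)) := by
  have hcount := hnet d (by rw [hd, Nat.sub_zero]) a ha
  obtain ⟨p, hp, hbox⟩ := Multiset.countP_pos.mp (by rw [hcount]; exact Nat.one_pos)
  obtain ⟨l, -, rfl⟩ := Multiset.mem_map.mp hp
  exact ⟨digitsVec m l, fun b k hk => eq_one_iff_testBit_of_phiMap_mem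
    ((Finset.single_le_sum_of_canonicallyOrdered (Finset.mem_univ b)).trans_eq hd)
    (hbox b).1 (hbox b).2 k hk⟩

theorem IsNet.linearIndepOn_leadingRows (hnet : IsNet 0 m s (digitalNet m s C))
    {d : Fin s → ℕ} (hd : ∑ b, d b = m) :
    LinearIndepOn (ZMod 2) (generatingRow C) (leadingRows m d) := by
  classical
  have hdual : ∀ p ∈ leadingRows m d, ∃ x : Fin m → ZMod 2, ∀ q ∈ leadingRows m d,
      generatingRow C q ⬝ᵥ x = if q = p then 1 else 0 := by
    rintro ⟨b₀, r₀⟩ hp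
    simp only [leadingRows, Set.mem_ofPred_eq] at hp
    -- the box whose only nonzero leading digit is digit `r₀` of coordinate `b₀`
    obtain ⟨x, hx⟩ := hnet.exists_mulVec_eq_one_iff_testBit hd
      (a := fun b => if b = b₀ then 2 ^ (d b₀ - 1 - r₀) else 0) fun b => by
        split_ifs with hb
        · subst hb; exact Nat.pow_lt_pow_right one_lt_two (by omega)
        · positivity
    refine ⟨x, fun ⟨b, r⟩ hq => ?_⟩
    have hiff : (C b *ᵥ x) r = 1 ↔ (b, r) = (b₀, r₀) := by
      rw [hx b r hq]
      split_ifs with hb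
      · subst hb
        simp only [Nat.testBit_two_pow, decide_eq_true_eq, Prod.ext_iff, Fin.ext_iff, true_and]
        simp only [leadingRows, Set.mem_ofPred_eq] at hq
        omega
      · simp [hb]
    change (C b *ᵥ x) r = _
    split_ifs with h
    · exact hiff.2 h
    · exact (ZMod.two_eq_zero_or_eq_one _).resolve_right fun h1 => h (hiff.1 h1)
  choose! x hx using hdual
  exact linearIndepOn_of_dotProduct_eq_ite x hx

theorem IsNet.span_leadingRows_eq_top (hnet : IsNet 0 m s (digitalNet m s C))
    {d : Fin s → ℕ} (hd : ∑ b, d b = m) :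
    Submodule.span (ZMod 2) (generatingRow C '' leadingRows m d) = ⊤ := by
  classical
  have hle : ∀ b, d b ≤ m := fun b =>
    (Finset.single_le_sum_of_canonicallyOrdered (Finset.mem_univ b)).trans_eq hd
  rw [Set.image_eq_range]
  refine (hnet.linearIndepOn_leadingRows hd).span_eq_top_of_card_eq_finrank' ?_
  rw [Module.finrank_fin_fun, ← Nat.card_eq_fintype_card, card_leadingRows hle, hd]

end Net

theorem rowSet_zero {m : ℕ} (M : Matrix (Fin m) (Fin m) (ZMod 2)) : rowSet M 0 = ∅ := by
  simp [rowSet]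

theorem image_generatingRow_leadingRows_three {m : ℕ} (A B C : Matrix (Fin m) (Fin m) (ZMod 2))
    (e₁ e₂ e₃ : ℕ) :
    generatingRow ![A, B, C] '' leadingRows m ![e₁, e₂, e₃] =
      rowSet A e₁ ∪ rowSet B e₂ ∪ rowSet C e₃ := by
  ext x
  constructor
  · rintro ⟨⟨b, r⟩, hr, rfl⟩
    fin_cases b
    exacts [.inl (.inl ⟨r, hr, rfl⟩), .inl (.inr ⟨r, hr, rfl⟩), .inr ⟨r, hr, rfl⟩]
  · rintro ((⟨r, hr, rfl⟩ | ⟨r, hr, rfl⟩) | ⟨r, hr, rfl⟩)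
    exacts [⟨(0, r), hr, rfl⟩, ⟨(1, r), hr, rfl⟩, ⟨(2, r), hr, rfl⟩]

theorem Vsub_eq_span_leadingRows {m : ℕ} (A B C : Matrix (Fin m) (Fin m) (ZMod 2)) (i j : ℕ) :
    Vsub A B C i j = Submodule.span (ZMod 2)
      (generatingRow ![A, B, C] '' leadingRows m ![i, m - i - j - 1, j]) := by
  rw [Vsub, image_generatingRow_leadingRows_three]

section ThreeMatrices

variable {m : ℕ} {A B C : Matrix (Fin m) (Fin m) (ZMod 2)}

theorem IsNet.compl_Vsub (hnet : IsNet 0 m 3 (digitalNet m 3 ![A, B, C])) {i j : ℕ}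
    (hij : i + j < m) :
    (Vsub A B C i j : Set (Fin m → ZMod 2))ᶜ = (C ⟨j, by omega⟩ + ·) '' Vsub A B C i j := by
  set p : Fin 3 × Fin m := (2, ⟨j, by omega⟩)
  have hp : p ∉ leadingRows m ![i, m - i - j - 1, j] := by simp [leadingRows, p]
  have hins : leadingRows m ![i, m - i - j - 1, j + 1] =
      insert p (leadingRows m ![i, m - i - j - 1, j]) := by
    ext ⟨b, r⟩
    fin_cases b <;> simp [leadingRows, p, Prod.ext_iff, Fin.ext_iff]
    omega
  have hd : ∑ b, ![i, m - i - j - 1, j + 1] b = m := by simp [Fin.sum_univ_three]; omega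
  rw [Vsub_eq_span_leadingRows, ← show generatingRow ![A, B, C] p = C ⟨j, by omega⟩ from rfl]
  refine Submodule.compl_eq_image_add_of_span_singleton_sup_eq_top ?_ ?_
  · exact (hins ▸ hnet.linearIndepOn_leadingRows hd).notMem_span_of_insert hp
  · rw [← Submodule.span_insert, ← Set.image_insert_eq, ← hins]
    exact hnet.span_leadingRows_eq_top hd

theorem IsNet.biInter_range_Vsub (hnet : IsNet 0 m 3 (digitalNet m 3 ![A, B, C])) {j n : ℕ}
    (hn : n + j < m) :
    ⋂ i ∈ Finset.range (n + 1), (Vsub A B C i j : Set (Fin m → ZMod 2)) =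
      Submodule.span (ZMod 2) (rowSet B (m - j - 1 - n) ∪ rowSet C j) := by
  induction n with
  | zero => simp [Vsub, rowSet_zero]
  | succ n ih =>
    have hd : ∑ b, ![n + 1, m - j - 1 - n, j] b = m := by simp [Fin.sum_univ_three]; omega
    have hle : ![n + 1, m - (n + 1) - j - 1, j] ≤ ![n + 1, m - j - 1 - n, j] := by
      intro b; fin_cases b <;> simp
      omega
    have hle' : ![0, m - j - 1 - n, j] ≤ ![n + 1, m - j - 1 - n, j] := by
      intro b; fin_cases b <;> simp
    have hinf : ![n + 1, m - (n + 1) - j - 1, j] ⊓ ![0, m - j - 1 - n, j] =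
        ![0, m - j - 1 - (n + 1), j] := by
      ext b; fin_cases b <;> simp
      omega
    have hBC : ∀ e, rowSet B e ∪ rowSet C j =
        generatingRow ![A, B, C] '' leadingRows m ![0, e, j] := fun e => by
      rw [image_generatingRow_leadingRows_three, rowSet_zero, Set.empty_union]
    rw [Finset.range_add_one, Finset.set_biInter_insert, ih (by omega), hBC, hBC,
      Vsub_eq_span_leadingRows, ← Submodule.coe_inf,
      ← (hnet.linearIndepOn_leadingRows hd).span_image_inter (leadingRows_mono hle)
        (leadingRows_mono hle'), leadingRows_inter, hinf]

end ThreeMatrices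

theorem stmt15 (m : ℕ) (hm : 1 ≤ m) (A B C : Matrix (Fin m) (Fin m) (ZMod 2))
    (hnet : IsNet 0 m 3 (digitalNet m 3 ![A, B, C]))
    (j : ℕ) (hj : j ≤ m - 1) :
    (fun v => C ⟨j, by omega⟩ + v) ''
        ↑(Submodule.span (ZMod 2) (rowSet C j))
      = ⋂ i ∈ Finset.range (m - j), ((Vsub A B C i j : Set (Fin m → ZMod 2))ᶜ) := by
  have hW : ⋂ i ∈ Finset.range (m - j), (Vsub A B C i j : Set (Fin m → ZMod 2)) =
      Submodule.span (ZMod 2) (rowSet C j) := by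
    rw [show m - j = m - j - 1 + 1 by omega, hnet.biInter_range_Vsub (by omega), Nat.sub_self,
      rowSet_zero, Set.empty_union]
  calc (C ⟨j, by omega⟩ + ·) '' (Submodule.span (ZMod 2) (rowSet C j) : Set (Fin m → ZMod 2))
      = ⋂ i ∈ Finset.range (m - j), (C ⟨j, by omega⟩ + ·) '' (Vsub A B C i j : Set _) := by
        rw [← hW]
        exact Set.image_iInter₂ (Equiv.addLeft _).bijective _
    _ = ⋂ i ∈ Finset.range (m - j), ((Vsub A B C i j : Set (Fin m → ZMod 2))ᶜ) :=
        Set.iInter₂_congr fun i hi =>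
          (hnet.compl_Vsub (by rw [Finset.mem_range] at hi; omega)).symm
end

section
/- Let m ≥ 1 and let A, B, C, C' be m×m matrices over F₂ such that the digital nets generated by (A, B, C) and by (A, B, C') are both (0,m,3)-nets over F₂. Let a_i, b_i, c_i, c'_i denote the i-th rows of A, B, C, C' respectively, and for integers i, j ≥ 0 with i+j ≤ m−1 let V_{i,j} = span{a_1,…,a_i, b_1,…,b_{m−i−j−1}, c_1,…,c_j} and W_{i,j} = span{a_1,…,a_i, b_1,…,b_{m−i−j−1}, c'_1,…,c'_j}, as F₂-subspaces of F₂^m. Then V_{i,j} = W_{i,j} for all such i and j. -/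
open Matrix

/-!
The elementary box at the origin of a `(0,m,3)`-net contains only the point of index `0`, so
for `p + q + r = m` the first `p` rows of `A`, `q` rows of `B` and `r` rows of `C` have no
common nonzero kernel vector: they form a basis of `F₂^m`. Let `a`, `b`, `c` be the rows
`a_{i+1}`, `b_{m-i-j-1}`, `c_{j+1}` and `U` the span of the rows preceding them, so that
`V_{i,j} = U + b`, `V_{i+1,j} = U + a` and `V_{i,j+1} = U + c`. These bases give
`U + a + b = F₂^m`, `a ∉ U + b`, `c ∉ U + a` and `c ∉ U + b`; over `F₂` this forces
`c ≡ a + b (mod U)`, whence `V_{i,j+1} = (V_{i,j} ∩ V_{i+1,j}) + ⟨a + b⟩`. The right-hand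
side does not involve `C`, so induction on `j` gives `V_{i,j} = W_{i,j}`.
-/

open Module Submodule

lemma digitsVec_zero (m : ℕ) : digitsVec m 0 = 0 := by
  ext k
  simp [digitsVec]

lemma digitsVec_injOn (m : ℕ) : Set.InjOn (digitsVec m) (Set.Iio (2 ^ m)) := by
  intro l₁ hl₁ l₂ hl₂ hl
  refine Nat.eq_of_testBit_eq fun k => ?_
  by_cases hk : k < m
  · have hbit := congrFun hl ⟨k, hk⟩
    simp only [digitsVec] at hbit
    generalize l₁.testBit k = b₁ at hbit
    generalize l₂.testBit k = b₂ at hbit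
    cases b₁ <;> cases b₂ <;> simp_all
  · have hpow : 2 ^ m ≤ 2 ^ k := Nat.pow_le_pow_right two_pos (not_lt.1 hk)
    rw [Nat.testBit_eq_false_of_lt (lt_of_lt_of_le hl₁ hpow),
      Nat.testBit_eq_false_of_lt (lt_of_lt_of_le hl₂ hpow)]

lemma exists_lt_digitsVec_eq {m : ℕ} (v : Fin m → ZMod 2) :
    ∃ l < 2 ^ m, digitsVec m l = v := by
  have hinj : Function.Injective fun l : Fin (2 ^ m) => digitsVec m l :=
    fun l₁ l₂ hl => Fin.ext (digitsVec_injOn m l₁.isLt l₂.isLt hl)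
  have hcard : Fintype.card (Fin (2 ^ m)) = Fintype.card (Fin m → ZMod 2) := by simp
  obtain ⟨l, hl⟩ := ((Fintype.bijective_iff_injective_and_card _).2 ⟨hinj, hcard⟩).2 v
  exact ⟨l, l.isLt, hl⟩

lemma phiMap_nonneg (m : ℕ) (y : Fin m → ZMod 2) : 0 ≤ phiMap m y :=
  Finset.sum_nonneg fun _ _ => by positivity

lemma sum_Ico_half_pow_succ {d m : ℕ} (h : d ≤ m) :
    ∑ k ∈ Finset.Ico d m, (1 / 2 : ℝ) ^ (k + 1) = (1 / 2) ^ d - (1 / 2) ^ m := by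
  induction m, h using Nat.le_induction with
  | base => simp
  | succ n hn ih =>
    rw [Finset.sum_Ico_succ_top hn, ih]
    ring

lemma phiMap_lt_of_forall_lt_eq_zero {m d : ℕ} (hd : d ≤ m) {y : Fin m → ZMod 2}
    (hy : ∀ k : Fin m, k.val < d → y k = 0) : phiMap m y < 1 / 2 ^ d := by
  let g : ℕ → ℝ := fun k => if k < d then 0 else (1 / 2) ^ (k + 1)
  have hterm : ∀ k : Fin m, ((y k).val : ℝ) / 2 ^ (k.val + 1) ≤ g k := by
    intro k
    by_cases hk : k.val < d
    · simp [g, hk, hy k hk]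
    · have hval : ((y k).val : ℝ) ≤ 1 := mod_cast Nat.le_of_lt_succ (ZMod.val_lt (y k))
      simp only [g, hk, if_false, _root_.one_div_pow]
      exact div_le_div_of_nonneg_right hval (by positivity)
  calc phiMap m y ≤ ∑ k : Fin m, g k := Finset.sum_le_sum fun k _ => hterm k
    _ = ∑ k ∈ Finset.Ico d m, (1 / 2 : ℝ) ^ (k + 1) := by
      rw [Fin.sum_univ_eq_sum_range g, ← Finset.sum_range_add_sum_Ico g hd,
        Finset.sum_eq_zero fun k hk => if_pos (Finset.mem_range.1 hk), zero_add]
      exact Finset.sum_congr rfl fun k hk => if_neg (not_lt.2 (Finset.mem_Ico.1 hk).1)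
    _ < 1 / 2 ^ d := by
      rw [sum_Ico_half_pow_succ hd, _root_.one_div_pow]
      linarith [pow_pos (one_half_pos (α := ℝ)) m]

theorem eq_zero_of_isNet_digitalNet {m s : ℕ} {C : Fin s → Matrix (Fin m) (Fin m) (ZMod 2)}
    (h : IsNet 0 m s (digitalNet m s C)) {d : Fin s → ℕ} (hd : ∑ i, d i = m)
    {v : Fin m → ZMod 2} (hv : ∀ i k, k.val < d i → (C i *ᵥ v) k = 0) : v = 0 := by
  classical
  by_contra hv0
  obtain ⟨l, hl, rfl⟩ := exists_lt_digitsVec_eq v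
  have hl0 : 0 ≠ l := fun h0 => hv0 (h0 ▸ digitsVec_zero m)
  let inBox : (Fin s → ℝ) → Prop := fun x => ∀ i,
    ((0 : ℕ) : ℝ) / 2 ^ d i ≤ x i ∧ x i < ((0 : ℕ) + 1) / 2 ^ d i
  let point : ℕ → Fin s → ℝ := fun n j => phiMap m (C j *ᵥ digitsVec m n)
  have hinBox :
      ∀ l' ∈ ({0, l} : Finset ℕ), l' ∈ Finset.range (2 ^ m) ∧ inBox (point l') := by
    intro l' hl'
    have hzero : ∀ i (k : Fin m), k.val < d i → (C i *ᵥ digitsVec m l') k = 0 := by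
      rcases Finset.mem_insert.1 hl' with rfl | hl'
      · simp [digitsVec_zero]
      · rwa [Finset.mem_singleton.1 hl']
    refine ⟨?_, fun i => ⟨?_, ?_⟩⟩
    · rcases Finset.mem_insert.1 hl' with rfl | hl' <;> simp_all
    · simpa using phiMap_nonneg m _
    · have hdi : d i ≤ m :=
        hd ▸ Finset.single_le_sum (fun _ _ => Nat.zero_le _) (Finset.mem_univ i)
      simpa using phiMap_lt_of_forall_lt_eq_zero hdi (hzero i)
  have htwo : 2 ≤ (digitalNet m s C).countP inBox := by
    rw [digitalNet, Multiset.countP_map]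
    exact (Finset.card_pair hl0).symm.trans_le
      (Finset.card_le_card fun l' hl' => Finset.mem_filter.2 (hinBox l' hl'))
  have hone := h d (by simpa using hd) (fun _ => 0) (fun i => Nat.two_pow_pos (d i))
  simp only [inBox] at htwo
  omega

lemma span_eq_top_of_forall_dotProduct_eq_zero {K n : Type*} [Field K] [Fintype n] [DecidableEq n]
    {S : Set (n → K)} (h : ∀ v, (∀ x ∈ S, x ⬝ᵥ v = 0) → v = 0) : span K S = ⊤ := by
  by_contra hS
  obtain ⟨f, hf, hSf⟩ := exists_le_ker_of_lt_top _ (lt_top_iff_ne_top.2 hS)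
  have hfv : ∀ x, f x = x ⬝ᵥ (dotProductEquiv K n).symm f := fun x => by
    rw [dotProduct_comm]
    exact (LinearMap.congr_fun ((dotProductEquiv K n).apply_symm_apply f) x).symm
  have hv := h _ fun x hx => (hfv x).symm.trans (hSf (subset_span hx))
  exact hf (LinearMap.ext fun x => by simp [hfv, hv])

section Subspaces

variable {K V : Type*} [DivisionRing K] [AddCommGroup V] [Module K V]

lemma notMem_of_sup_span_singleton_eq_top [FiniteDimensional K V] {W : Submodule K V} {x : V}
    (htop : W ⊔ K ∙ x = ⊤) (hW : finrank K W < finrank K V) : x ∉ W := by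
  intro hx
  rw [sup_eq_left.2 ((span_singleton_le_iff_mem _ _).2 hx)] at htop
  rw [htop, finrank_top] at hW
  exact lt_irrefl _ hW

lemma sup_span_singleton_inf_sup_span_singleton {U : Submodule K V} {a b : V}
    (ha : a ∉ U ⊔ K ∙ b) : (U ⊔ K ∙ b) ⊓ (U ⊔ K ∙ a) = U := by
  have hdisj : Disjoint (U ⊔ K ∙ b) (K ∙ a) := disjoint_span_singleton.2 fun h => absurd h ha
  rw [inf_comm, sup_inf_assoc_of_le _ le_sup_left, disjoint_iff.1 hdisj.symm, sup_bot_eq]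

lemma sup_span_singleton_eq_of_sub_mem {U : Submodule K V} {x y : V} (h : x - y ∈ U) :
    U ⊔ K ∙ x = U ⊔ K ∙ y := by
  have key : ∀ {x y : V}, x - y ∈ U → U ⊔ K ∙ x ≤ U ⊔ K ∙ y := fun {x y} h =>
    sup_le le_sup_left <| (span_singleton_le_iff_mem _ _).2 <| by
      rw [← sub_add_cancel x y]
      exact add_mem (mem_sup_left h) (mem_sup_right (mem_span_singleton_self y))
  exact le_antisymm (key h) (key (by rw [← neg_sub]; exact neg_mem h))

end Subspaces

lemma sup_span_singleton_eq_sup_span_add {V : Type*} [AddCommGroup V] [Module (ZMod 2) V]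
    {U : Submodule (ZMod 2) V} {a b c : V} (hc : c ∈ U ⊔ ZMod 2 ∙ a ⊔ ZMod 2 ∙ b)
    (hca : c ∉ U ⊔ ZMod 2 ∙ a) (hcb : c ∉ U ⊔ ZMod 2 ∙ b) :
    U ⊔ ZMod 2 ∙ c = U ⊔ ZMod 2 ∙ (a + b) := by
  have eq_one : ∀ {r : ZMod 2}, r ≠ 0 → r = 1 := by decide
  obtain ⟨w, hw, _, hsb, rfl⟩ := mem_sup.1 hc
  obtain ⟨s, rfl⟩ := mem_span_singleton.1 hsb
  obtain ⟨u, hu, _, hra, rfl⟩ := mem_sup.1 hw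
  obtain ⟨r, rfl⟩ := mem_span_singleton.1 hra
  have hs : s = 1 := eq_one fun hs => hca (by simpa [hs] using hw)
  have hr : r = 1 := eq_one fun hr => hcb <| by
    simpa [hr] using
      add_mem (mem_sup_left hu) (mem_sup_right (smul_mem _ s (mem_span_singleton_self b)))
  exact sup_span_singleton_eq_of_sub_mem (by simpa [hr, hs, add_assoc] using hu)

def rowSpan {m : ℕ} (M : Matrix (Fin m) (Fin m) (ZMod 2)) (n : ℕ) :
    Submodule (ZMod 2) (Fin m → ZMod 2) :=
  span (ZMod 2) (rowSet M n)

section RowSpan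

variable {m : ℕ}

lemma rowSpan_zero (M : Matrix (Fin m) (Fin m) (ZMod 2)) : rowSpan M 0 = ⊥ := by
  simp [rowSpan, rowSet]

lemma rowSpan_succ (M : Matrix (Fin m) (Fin m) (ZMod 2)) {n : ℕ} (hn : n < m) :
    rowSpan M (n + 1) = rowSpan M n ⊔ ZMod 2 ∙ M ⟨n, hn⟩ := by
  have hrows : rowSet M (n + 1) = insert (M ⟨n, hn⟩) (rowSet M n) := by
    ext x
    simp only [rowSet, Set.mem_ofPred_eq, Set.mem_insert_iff, Nat.lt_succ_iff_lt_or_eq]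
    constructor
    · rintro ⟨r, hr | hr, rfl⟩
      · exact Or.inr ⟨r, hr, rfl⟩
      · exact Or.inl (congrArg M (Fin.ext hr))
    · rintro (rfl | ⟨r, hr, rfl⟩)
      · exact ⟨⟨n, hn⟩, Or.inr rfl, rfl⟩
      · exact ⟨r, Or.inl hr, rfl⟩
  rw [rowSpan, rowSpan, hrows, span_insert, sup_comm]

lemma finrank_rowSpan_le (M : Matrix (Fin m) (Fin m) (ZMod 2)) (n : ℕ) :
    finrank (ZMod 2) (rowSpan M n) ≤ n := by
  have hrows : rowSet M n = Set.range fun r : {r : Fin m // r.val < n} => M r := by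
    ext x
    simp [rowSet, eq_comm]
  calc finrank (ZMod 2) (rowSpan M n) ≤ Fintype.card {r : Fin m // r.val < n} := by
        rw [rowSpan, hrows]
        exact finrank_range_le_card _
    _ ≤ n := by
        simpa using Fintype.card_le_of_injective (fun r => (⟨r.1, r.2⟩ : Fin n))
          fun r₁ r₂ h => Subtype.ext (Fin.ext (Fin.mk.inj_iff.1 h))

lemma finrank_rowSpan_sup_le (A B C : Matrix (Fin m) (Fin m) (ZMod 2)) (p q r : ℕ) :
    finrank (ZMod 2) ↥(rowSpan A p ⊔ rowSpan B q ⊔ rowSpan C r) ≤ p + q + r :=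
  (finrank_add_le_finrank_add_finrank _ _).trans <| add_le_add
    ((finrank_add_le_finrank_add_finrank _ _).trans
      (add_le_add (finrank_rowSpan_le A p) (finrank_rowSpan_le B q)))
    (finrank_rowSpan_le C r)

lemma Vsub_eq_rowSpan_sup (A B C : Matrix (Fin m) (Fin m) (ZMod 2)) (i j : ℕ) :
    Vsub A B C i j = rowSpan A i ⊔ rowSpan B (m - i - j - 1) ⊔ rowSpan C j := by
  rw [Vsub, span_union, span_union, rowSpan, rowSpan, rowSpan]

lemma rowSpan_sup_eq_top_of_isNet {A B C : Matrix (Fin m) (Fin m) (ZMod 2)}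
    (h : IsNet 0 m 3 (digitalNet m 3 ![A, B, C])) {p q r : ℕ} (hpqr : p + q + r = m) :
    rowSpan A p ⊔ rowSpan B q ⊔ rowSpan C r = ⊤ := by
  rw [rowSpan, rowSpan, rowSpan, ← span_union, ← span_union]
  refine span_eq_top_of_forall_dotProduct_eq_zero fun v hv =>
    eq_zero_of_isNet_digitalNet h (d := ![p, q, r]) (by simp [Fin.sum_univ_three, hpqr])
      fun i k hk => ?_
  fin_cases i
  · exact hv (A k) (Or.inl (Or.inl ⟨k, hk, rfl⟩))
  · exact hv (B k) (Or.inl (Or.inr ⟨k, hk, rfl⟩))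
  · exact hv (C k) (Or.inr ⟨k, hk, rfl⟩)

end RowSpan

lemma finrank_Vsub_lt {m : ℕ} (A B C : Matrix (Fin m) (Fin m) (ZMod 2)) {i j : ℕ}
    (hij : i + j < m) : finrank (ZMod 2) (Vsub A B C i j) < m := by
  have hle := finrank_rowSpan_sup_le A B C i (m - i - j - 1) j
  rw [Vsub_eq_rowSpan_sup]
  omega

lemma Vsub_succ_right {m : ℕ} {A B C : Matrix (Fin m) (Fin m) (ZMod 2)}
    (h : IsNet 0 m 3 (digitalNet m 3 ![A, B, C])) {i j : ℕ} (hij : i + j + 2 ≤ m) :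
    Vsub A B C i (j + 1) =
      Vsub A B C i j ⊓ Vsub A B C (i + 1) j ⊔
        ZMod 2 ∙ (A ⟨i, by omega⟩ + B ⟨m - i - j - 2, by omega⟩) := by
  set n := m - i - j - 2
  set a := A ⟨i, by omega⟩
  set b := B ⟨n, by omega⟩
  set c := C ⟨j, by omega⟩
  set U := rowSpan A i ⊔ rowSpan B n ⊔ rowSpan C j
  have hA : rowSpan A (i + 1) = rowSpan A i ⊔ ZMod 2 ∙ a := rowSpan_succ A _
  have hB : rowSpan B (n + 1) = rowSpan B n ⊔ ZMod 2 ∙ b := rowSpan_succ B _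
  have hC : rowSpan C (j + 1) = rowSpan C j ⊔ ZMod 2 ∙ c := rowSpan_succ C _
  have hVb : Vsub A B C i j = U ⊔ ZMod 2 ∙ b := by
    rw [Vsub_eq_rowSpan_sup, show m - i - j - 1 = n + 1 by omega, hB]; simp only [U]; ac_rfl
  have hVa : Vsub A B C (i + 1) j = U ⊔ ZMod 2 ∙ a := by
    rw [Vsub_eq_rowSpan_sup, show m - (i + 1) - j - 1 = n by omega, hA]; simp only [U]; ac_rfl
  have hVc : Vsub A B C i (j + 1) = U ⊔ ZMod 2 ∙ c := by
    rw [Vsub_eq_rowSpan_sup, show m - i - (j + 1) - 1 = n by omega, hC]; simp only [U]; ac_rfl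
  have hab : U ⊔ ZMod 2 ∙ b ⊔ ZMod 2 ∙ a = ⊤ := by
    rw [← rowSpan_sup_eq_top_of_isNet h (p := i + 1) (q := n + 1) (r := j) (by omega), hA, hB]
    simp only [U]; ac_rfl
  have hac : U ⊔ ZMod 2 ∙ a ⊔ ZMod 2 ∙ c = ⊤ := by
    rw [← rowSpan_sup_eq_top_of_isNet h (p := i + 1) (q := n) (r := j + 1) (by omega), hA, hC]
    simp only [U]; ac_rfl
  have hbc : U ⊔ ZMod 2 ∙ b ⊔ ZMod 2 ∙ c = ⊤ := by
    rw [← rowSpan_sup_eq_top_of_isNet h (p := i) (q := n + 1) (r := j + 1) (by omega), hB, hC]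
    simp only [U]; ac_rfl
  have hdim : finrank (ZMod 2) (Fin m → ZMod 2) = m := finrank_fin_fun _
  have ha_b : a ∉ U ⊔ ZMod 2 ∙ b := notMem_of_sup_span_singleton_eq_top hab <| by
    rw [← hVb, hdim]; exact finrank_Vsub_lt A B C (by omega)
  have hc_a : c ∉ U ⊔ ZMod 2 ∙ a := notMem_of_sup_span_singleton_eq_top hac <| by
    rw [← hVa, hdim]; exact finrank_Vsub_lt A B C (by omega)
  have hc_b : c ∉ U ⊔ ZMod 2 ∙ b := notMem_of_sup_span_singleton_eq_top hbc <| by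
    rw [← hVb, hdim]; exact finrank_Vsub_lt A B C (by omega)
  have hc : c ∈ U ⊔ ZMod 2 ∙ a ⊔ ZMod 2 ∙ b := by
    rw [sup_right_comm, hab]; exact mem_top
  rw [hVc, hVb, hVa, sup_span_singleton_inf_sup_span_singleton ha_b,
    sup_span_singleton_eq_sup_span_add hc hc_a hc_b]

theorem stmt18_general (m : ℕ) (A B C C' : Matrix (Fin m) (Fin m) (ZMod 2))
    (h : IsNet 0 m 3 (digitalNet m 3 ![A, B, C]))
    (h' : IsNet 0 m 3 (digitalNet m 3 ![A, B, C'])) :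
    ∀ i j : ℕ, i + j ≤ m - 1 → Vsub A B C i j = Vsub A B C' i j := by
  intro i j hij
  induction j generalizing i with
  | zero => simp only [Vsub_eq_rowSpan_sup, rowSpan_zero]
  | succ j ih =>
    rw [Vsub_succ_right h (by omega), Vsub_succ_right h' (by omega), ih i (by omega),
      ih (i + 1) (by omega)]

theorem stmt18 (m : ℕ) (hm : 1 ≤ m) (A B C C' : Matrix (Fin m) (Fin m) (ZMod 2))
    (h : IsNet 0 m 3 (digitalNet m 3 ![A, B, C]))
    (h' : IsNet 0 m 3 (digitalNet m 3 ![A, B, C'])) :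
    ∀ i j : ℕ, i + j ≤ m - 1 → Vsub A B C i j = Vsub A B C' i j :=
  stmt18_general m A B C C' h h'
end
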